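/- Consider the linearly parameterized error dynamics ṡ = −η s + Y(t)(â − a) with η > 0, together with the composite adaptation law â̇ = −P Y(t)ᵀ(γ s + κ Y(t)(â − a)), where P = Pᵀ > 0 is a constant positive definite matrix and γ, κ > 0. Then all trajectories (x, â) remain bounded, s ∈ L² ∩ L∞, the function approximation error f̃ = Y(â − a) ∈ L², s(t) → 0 as t → ∞, and x(t) → x_d(t). -/

import Mathlib

/-!
Along trajectories, `V = γ s² / 2 + ⟪ã, P⁻¹ ã⟫ / 2` (with `ã = â - a`) satisfies
`V̇ = -(γ η s² + κ (Y ã)²)`. Hence `V` is nonincreasing and its dissipation is integrable: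
this bounds `s` and `ã`, hence `x`, `Y` and `ṡ`, and puts `s` and `Y ã` in `L²`.
Barbalat's lemma (`s ∈ L²` with `s` uniformly continuous) then gives `s → 0`.
-/

open MeasureTheory Filter
open scoped RealInnerProductSpace ENNReal

noncomputable section

/-- The signal `g` is square-integrable (`L²`) on `[0, ∞)`. -/
def InL2 {F : Type*} [NormedAddCommGroup F] (g : ℝ → F) : Prop :=
  ∫⁻ t in Set.Ici (0 : ℝ), ENNReal.ofReal (‖g t‖ ^ 2) < ⊤

/-- The signal `g` is bounded (`L∞`) on `[0, ∞)`. -/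
def InLinf {F : Type*} [NormedAddCommGroup F] (g : ℝ → F) : Prop :=
  ∃ C : ℝ, ∀ t : ℝ, 0 ≤ t → ‖g t‖ ≤ C

open Set

section PositiveDefinite

variable {E : Type*} [NormedAddCommGroup E] [InnerProductSpace ℝ E]

theorem exists_pos_mul_norm_sq_le_inner [ProperSpace E] (T : E →L[ℝ] E)
    (hT : ∀ v, v ≠ 0 → 0 < ⟪v, T v⟫) : ∃ μ, 0 < μ ∧ ∀ v, μ * ‖v‖ ^ 2 ≤ ⟪v, T v⟫ := by
  rcases subsingleton_or_nontrivial E with hE | hE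
  · exact ⟨1, one_pos, fun v => by simp [Subsingleton.elim v 0]⟩
  have hcont : Continuous fun v : E => ⟪v, T v⟫ := by fun_prop
  obtain ⟨u, hu, hmin⟩ := (isCompact_sphere (0 : E) 1).exists_isMinOn
    (NormedSpace.sphere_nonempty.2 zero_le_one) hcont.continuousOn
  refine ⟨⟪u, T u⟫, hT u (ne_zero_of_mem_unit_sphere ⟨u, hu⟩), fun v => ?_⟩
  rcases eq_or_ne v 0 with rfl | hv
  · simp
  have hv' : ‖v‖ ≠ 0 := norm_ne_zero_iff.2 hv
  have hmin_v : ⟪u, T u⟫ ≤ ⟪‖v‖⁻¹ • v, T (‖v‖⁻¹ • v)⟫ :=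
    hmin (by simp [norm_smul, hv'])
  rw [T.map_smul, real_inner_smul_left, real_inner_smul_right, ← mul_assoc, ← sq] at hmin_v
  calc ⟪u, T u⟫ * ‖v‖ ^ 2 ≤ (‖v‖⁻¹ ^ 2 * ⟪v, T v⟫) * ‖v‖ ^ 2 := by gcongr
    _ = ⟪v, T v⟫ := by field_simp

theorem exists_symm_posDef_rightInverse [FiniteDimensional ℝ E] (P : E →L[ℝ] E)
    (hPsym : (P : E →ₗ[ℝ] E).IsSymmetric) (hPpos : ∀ v, v ≠ 0 → 0 < ⟪v, P v⟫) :
    ∃ Q : E →L[ℝ] E, (∀ v, P (Q v) = v) ∧ (Q : E →ₗ[ℝ] E).IsSymmetric ∧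
      ∀ v, v ≠ 0 → 0 < ⟪v, Q v⟫ := by
  have hinj : Function.Injective (P : E →ₗ[ℝ] E) := by
    refine (injective_iff_map_eq_zero _).2 fun v (hv : P v = 0) => ?_
    by_contra hne
    simpa [hv] using hPpos v hne
  let Q : E →L[ℝ] E := (LinearEquiv.ofInjectiveEndo _ hinj).toContinuousLinearEquiv.symm
  have hPQ : ∀ v, P (Q v) = v := fun v =>
    congr($(LinearEquiv.ofInjectiveEndo_right_inv _ hinj) v)
  refine ⟨Q, hPQ, fun v w => ?_, fun v hv => ?_⟩
  · change ⟪Q v, w⟫ = ⟪v, Q w⟫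
    conv_lhs => rw [← hPQ w]
    conv_rhs => rw [← hPQ v]
    exact (hPsym (Q v) (Q w)).symm
  · have hQv : Q v ≠ 0 := fun h => hv (by rw [← hPQ v, h, map_zero])
    simpa [hPQ, real_inner_comm] using hPpos (Q v) hQv

end PositiveDefinite

section Lyapunov

variable {E : Type*} [NormedAddCommGroup E] [InnerProductSpace ℝ E]

def compositeLyapunov (γ : ℝ) (Q : E →L[ℝ] E) (s : ℝ → ℝ) (e : ℝ → E) (t : ℝ) : ℝ :=
  γ / 2 * s t ^ 2 + 1 / 2 * ⟪e t, Q (e t)⟫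

theorem hasDerivAt_compositeLyapunov {P Q : E →L[ℝ] E} (hPsym : (P : E →ₗ[ℝ] E).IsSymmetric)
    (hPQ : ∀ v, P (Q v) = v) (hQsym : (Q : E →ₗ[ℝ] E).IsSymmetric) {s : ℝ → ℝ} {e : ℝ → E}
    {y : E} {η γ κ t : ℝ} (hs : HasDerivAt s (-η * s t + ⟪y, e t⟫) t)
    (he : HasDerivAt e (-(P ((γ * s t + κ * ⟪y, e t⟫) • y))) t) :
    HasDerivAt (compositeLyapunov γ Q s e) (-(γ * η * s t ^ 2 + κ * ⟪y, e t⟫ ^ 2)) t := by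
  set c := γ * s t + κ * ⟪y, e t⟫
  have hQe : HasDerivAt (fun τ => Q (e τ)) (Q (-(P (c • y)))) t :=
    Q.hasFDerivAt.comp_hasDerivAt t he
  -- Since `Q` inverts `P`, the cross terms `γ s ⟪y, e⟫` coming from `ṡ` and from `ė` cancel.
  have hcross : ⟪P (c • y), Q (e t)⟫ = c * ⟪y, e t⟫ :=
    calc ⟪P (c • y), Q (e t)⟫ = ⟪c • y, P (Q (e t))⟫ := hPsym _ _
      _ = c * ⟪y, e t⟫ := by rw [hPQ, real_inner_smul_left]
  have hcross' : ⟪e t, Q (P (c • y))⟫ = c * ⟪y, e t⟫ :=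
    ((real_inner_comm _ _).trans (hQsym _ _)).trans hcross
  refine ((hs.pow 2).const_mul (γ / 2) |>.add ((he.inner ℝ hQe).const_mul (1 / 2))).congr_deriv ?_
  simp only [map_neg, inner_neg_left, inner_neg_right, hcross, hcross', c]
  push_cast
  ring

theorem half_mul_sq_le_compositeLyapunov {γ : ℝ} {Q : E →L[ℝ] E} (hQ : ∀ v, 0 ≤ ⟪v, Q v⟫)
    (s : ℝ → ℝ) (e : ℝ → E) (t : ℝ) : γ / 2 * s t ^ 2 ≤ compositeLyapunov γ Q s e t := by
  unfold compositeLyapunov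
  linarith [hQ (e t)]

theorem half_mul_norm_sq_le_compositeLyapunov {γ μ : ℝ} (hγ : 0 ≤ γ) {Q : E →L[ℝ] E}
    (hQ : ∀ v, μ * ‖v‖ ^ 2 ≤ ⟪v, Q v⟫) (s : ℝ → ℝ) (e : ℝ → E) (t : ℝ) :
    μ / 2 * ‖e t‖ ^ 2 ≤ compositeLyapunov γ Q s e t := by
  unfold compositeLyapunov
  nlinarith [hQ (e t), sq_nonneg (s t)]

end Lyapunov

section Dissipation

variable {V g : ℝ → ℝ} {a : ℝ}

theorem antitoneOn_Ici_of_hasDerivAt_neg (hV : ∀ t, a ≤ t → HasDerivAt V (-g t) t)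
    (hg : ∀ t, a ≤ t → 0 ≤ g t) : AntitoneOn V (Ici a) := by
  refine antitoneOn_of_hasDerivWithinAt_nonpos (f' := fun t => -g t) (convex_Ici a)
    (fun t ht => (hV t ht).continuousAt.continuousWithinAt) (fun t ht => ?_) fun t ht => ?_
  all_goals rw [interior_Ici] at ht
  · exact (hV t ht.le).hasDerivWithinAt
  · exact neg_nonpos.2 (hg t ht.le)

theorem integrableOn_Ioc_of_hasDerivAt_neg (hV : ∀ t, a ≤ t → HasDerivAt V (-g t) t)
    (hg : ∀ t, a ≤ t → 0 ≤ g t) (T : ℝ) : IntegrableOn g (Ioc a T) :=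
  intervalIntegral.integrableOn_deriv_of_nonneg
    (fun t ht => (hV t ht.1).neg.continuousAt.continuousWithinAt)
    (fun t ht => by simpa using (hV t ht.1.le).neg) fun t ht => hg t ht.1.le

theorem integral_eq_sub_of_hasDerivAt_neg (hV : ∀ t, a ≤ t → HasDerivAt V (-g t) t)
    (hg : ∀ t, a ≤ t → 0 ≤ g t) {T : ℝ} (hT : a ≤ T) : ∫ t in a..T, g t = V a - V T := by
  have := intervalIntegral.integral_eq_sub_of_hasDerivAt_of_le hT
    (fun t ht => (hV t ht.1).neg.continuousAt.continuousWithinAt)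
    (fun t ht => by simpa using (hV t ht.1.le).neg)
    ((intervalIntegrable_iff_integrableOn_Ioc_of_le hT).2
      (integrableOn_Ioc_of_hasDerivAt_neg hV hg T))
  simpa [sub_eq_neg_add, add_comm] using this

theorem integrableOn_Ioi_of_hasDerivAt_neg {m : ℝ} (hV : ∀ t, a ≤ t → HasDerivAt V (-g t) t)
    (hg : ∀ t, a ≤ t → 0 ≤ g t) (hm : ∀ t, a ≤ t → m ≤ V t) : IntegrableOn g (Ioi a) := by
  refine integrableOn_Ioi_of_intervalIntegral_norm_bounded (V a - m) a
    (integrableOn_Ioc_of_hasDerivAt_neg hV hg) tendsto_id ?_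
  filter_upwards [eventually_ge_atTop a] with T hT
  calc ∫ t in a..T, ‖g t‖ = ∫ t in a..T, g t :=
        intervalIntegral.integral_congr fun t ht => by
          rw [uIcc_of_le hT] at ht
          exact Real.norm_of_nonneg (hg t ht.1)
    _ = V a - V T := integral_eq_sub_of_hasDerivAt_neg hV hg hT
    _ ≤ V a - m := by linarith [hm T hT]

end Dissipation

section Signals

variable {F : Type*} [NormedAddCommGroup F]

theorem inLinf_const (c : F) : InLinf fun _ : ℝ => c :=
  ⟨‖c‖, fun _ _ => le_rfl⟩

theorem InLinf.add {f g : ℝ → F} (hf : InLinf f) (hg : InLinf g) : InLinf fun t => f t + g t := by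
  obtain ⟨C, hC⟩ := hf
  obtain ⟨D, hD⟩ := hg
  exact ⟨C + D, fun t ht => (norm_add_le _ _).trans (add_le_add (hC t ht) (hD t ht))⟩

theorem InLinf.const_mul {f : ℝ → ℝ} (c : ℝ) (hf : InLinf f) : InLinf fun t => c * f t := by
  obtain ⟨C, hC⟩ := hf
  exact ⟨|c| * C, fun t ht => by rw [norm_mul, Real.norm_eq_abs]; gcongr; exact hC t ht⟩

theorem InLinf.inner {E : Type*} [NormedAddCommGroup E] [InnerProductSpace ℝ E] {f g : ℝ → E}
    (hf : InLinf f) (hg : InLinf g) : InLinf fun t => ⟪f t, g t⟫ := by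
  obtain ⟨C, hC⟩ := hf
  obtain ⟨D, hD⟩ := hg
  refine ⟨C * D, fun t ht => (norm_inner_le_norm _ _).trans ?_⟩
  exact mul_le_mul (hC t ht) (hD t ht) (norm_nonneg _) ((norm_nonneg _).trans (hC t ht))

theorem inLinf_of_mul_sq_le {f : ℝ → F} {c C : ℝ} (hc : 0 < c)
    (h : ∀ t, 0 ≤ t → c * ‖f t‖ ^ 2 ≤ C) : InLinf f := by
  refine ⟨√(C / c), fun t ht => ?_⟩
  simpa using Real.abs_le_sqrt ((le_div_iff₀' hc).2 (h t ht))

theorem inL2_of_mul_sq_le {f : ℝ → F} {g : ℝ → ℝ} {c : ℝ} (hg : IntegrableOn g (Ici 0))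
    (hc : 0 < c) (h : ∀ t, 0 ≤ t → c * ‖f t‖ ^ 2 ≤ g t) : InL2 f := by
  calc ∫⁻ t in Ici 0, ENNReal.ofReal (‖f t‖ ^ 2)
      ≤ ∫⁻ t in Ici 0, ENNReal.ofReal c⁻¹ * ENNReal.ofReal (g t) := by
        refine setLIntegral_mono' measurableSet_Ici fun t ht => ?_
        rw [← ENNReal.ofReal_mul (inv_nonneg.2 hc.le)]
        exact ENNReal.ofReal_le_ofReal ((le_inv_mul_iff₀ hc).2 (h t ht))
    _ = ENNReal.ofReal c⁻¹ * ∫⁻ t in Ici 0, ENNReal.ofReal (g t) :=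
        lintegral_const_mul' _ _ ENNReal.ofReal_ne_top
    _ < ⊤ := ENNReal.mul_lt_top ENNReal.ofReal_lt_top hg.lintegral_lt_top

end Signals

section Barbalat

theorem tendsto_intervalIntegral_add_atTop_zero {g : ℝ → ℝ} {a : ℝ} (hg : IntegrableOn g (Ioi a))
    (δ : ℝ) : Tendsto (fun t => ∫ τ in t..t + δ, g τ) atTop (nhds 0) := by
  have hii : ∀ b, a ≤ b → IntervalIntegrable g volume a b := fun b hb =>
    (intervalIntegrable_iff_integrableOn_Ioc_of_le hb).2 (hg.mono_set Ioc_subset_Ioi_self)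
  have hlim := intervalIntegral_tendsto_integral_Ioi a hg tendsto_id
  rw [← sub_self (∫ τ in Ioi a, g τ)]
  refine ((hlim.comp (tendsto_atTop_add_const_right _ δ tendsto_id)).sub hlim).congr' ?_
  filter_upwards [eventually_ge_atTop a, eventually_ge_atTop (a - δ)] with t ht htδ
  exact intervalIntegral.integral_interval_sub_left (hii _ (by simp at *; linarith)) (hii t ht)

theorem integrableOn_sq_of_inL2 {f : ℝ → ℝ} (hf : InL2 f) (hcont : ContinuousOn f (Ici 0)) :
    IntegrableOn (fun t => f t ^ 2) (Ici 0) := by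
  refine ⟨(hcont.pow 2).aestronglyMeasurable measurableSet_Ici,
    (hasFiniteIntegral_iff_ofReal (ae_of_all _ fun t => sq_nonneg (f t))).2 ?_⟩
  simpa [InL2, Real.norm_eq_abs, sq_abs] using hf

/-- Barbalat's lemma. -/
theorem tendsto_zero_of_inL2_of_uniformContinuousOn {f : ℝ → ℝ} (hf : InL2 f)
    (huc : UniformContinuousOn f (Ici 0)) : Tendsto f atTop (nhds 0) := by
  rw [Metric.tendsto_atTop]
  intro ε hε
  obtain ⟨δ, hδ, hfδ⟩ := Metric.uniformContinuousOn_iff.1 huc (ε / 2) (half_pos hε)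
  have hint := (integrableOn_sq_of_inL2 hf huc.continuousOn).mono_set Ioi_subset_Ici_self
  obtain ⟨N, hN⟩ := eventually_atTop.1 <| (tendsto_intervalIntegral_add_atTop_zero hint
    (δ / 2)).eventually (gt_mem_nhds (by positivity : (0 : ℝ) < δ / 2 * (ε / 2) ^ 2))
  refine ⟨max N 0, fun t ht => ?_⟩
  have ht0 : 0 ≤ t := (le_max_right _ _).trans ht
  rw [Real.dist_eq, sub_zero]
  by_contra! hft
  have hlow : ∀ τ ∈ Icc t (t + δ / 2), (ε / 2) ^ 2 ≤ f τ ^ 2 := by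
    intro τ hτ
    have hclose := hfδ τ (ht0.trans hτ.1) t ht0
      (by rw [Real.dist_eq, abs_of_nonneg (by linarith [hτ.1])]; linarith [hτ.2])
    rw [Real.dist_eq] at hclose
    have : ε / 2 ≤ |f τ| := by
      linarith [abs_sub_abs_le_abs_sub (f t) (f τ), abs_sub_comm (f τ) (f t)]
    nlinarith [sq_abs (f τ)]
  have hge : δ / 2 * (ε / 2) ^ 2 ≤ ∫ τ in t..t + δ / 2, f τ ^ 2 := by
    have := intervalIntegral.integral_mono_on (by linarith) intervalIntegrable_const
      ((intervalIntegrable_iff_integrableOn_Ioc_of_le (by linarith)).2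
        (hint.mono_set fun τ hτ => ht0.trans_lt hτ.1)) hlow
    simpa using this
  exact (hN t ((le_max_left _ _).trans ht)).not_ge hge

theorem uniformContinuousOn_Ici_of_hasDerivAt {f f' : ℝ → ℝ}
    (hf : ∀ t, 0 ≤ t → HasDerivAt f (f' t) t) (hf' : InLinf f') :
    UniformContinuousOn f (Ici 0) := by
  obtain ⟨C, hC⟩ := hf'
  refine (convex_Ici 0).lipschitzOnWith_of_nnnorm_hasDerivWithin_le (C := C.toNNReal)
    (fun t ht => (hf t ht).hasDerivWithinAt) (fun t ht => ?_) |>.uniformContinuousOn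
  rw [← NNReal.coe_le_coe, coe_nnnorm, Real.coe_toNNReal']
  exact (hC t ht).trans (le_max_left _ _)

end Barbalat

/-- first-order composite adaptation law.
The error dynamics `ṡ = -η s + Y(t)(â - a)` together with the composite adaptation law
`â̇ = -P Y(t)ᵀ (γ s + κ Y(t)(â - a))` with `P = Pᵀ > 0` and `γ, κ > 0` guarantees that
all trajectories remain bounded, `s ∈ L² ∩ L∞`, `f̃ = Y(â - a) ∈ L²`, `s → 0` and `x → x_d`. -/
theorem composite_adaptation_linear
    {n p : ℕ}
    (x xd : ℝ → EuclideanSpace ℝ (Fin n))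
    (s : ℝ → ℝ)
    (Y : ℝ → EuclideanSpace ℝ (Fin p))
    (a : EuclideanSpace ℝ (Fin p))
    (ahat : ℝ → EuclideanSpace ℝ (Fin p))
    (P : EuclideanSpace ℝ (Fin p) →L[ℝ] EuclideanSpace ℝ (Fin p))
    (η γ κ : ℝ)
    (hη : 0 < η) (hγ : 0 < γ) (hκ : 0 < κ)
    -- P is symmetric positive definite
    (hPsym : ∀ v w : EuclideanSpace ℝ (Fin p), ⟪P v, w⟫ = ⟪v, P w⟫)
    (hPpos : ∀ v : EuclideanSpace ℝ (Fin p), v ≠ 0 → 0 < ⟪v, P v⟫)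
    -- error dynamics ṡ = -η s + Y (â - a)
    (hs : ∀ t, 0 ≤ t → HasDerivAt s (-η * s t + ⟪Y t, ahat t - a⟫) t)
    -- composite adaptation law â̇ = -P Yᵀ (γ s + κ Y(â - a))
    (ha : ∀ t, 0 ≤ t →
      HasDerivAt ahat (-(P ((γ * s t + κ * ⟪Y t, ahat t - a⟫) • Y t))) t)
    -- the regressor Y(x, t) is locally bounded in x uniformly in t
    (hYloc : ∀ R : ℝ, ∃ M : ℝ, ∀ t, 0 ≤ t → ‖x t‖ ≤ R → ‖Y t‖ ≤ M)
    -- boundedness of s implies boundedness of x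
    (hsx : InLinf s → InLinf x)
    -- s → 0 implies x → x_d
    (hxd : Tendsto s atTop (nhds 0) →
      Tendsto (fun t => x t - xd t) atTop (nhds 0)) :
    InLinf x ∧ InLinf ahat ∧
    (InL2 s ∧ InLinf s) ∧
    InL2 (fun t => ⟪Y t, ahat t - a⟫) ∧
    Tendsto s atTop (nhds 0) ∧
    Tendsto (fun t => x t - xd t) atTop (nhds 0) := by
  obtain ⟨Q, hPQ, hQsym, hQpos⟩ := exists_symm_posDef_rightInverse P hPsym hPpos
  obtain ⟨μ, hμ, hQμ⟩ := exists_pos_mul_norm_sq_le_inner Q hQpos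
  have hQnn : ∀ v, 0 ≤ ⟪v, Q v⟫ := fun v => (by positivity : 0 ≤ μ * ‖v‖ ^ 2).trans (hQμ v)
  set e := fun t => ahat t - a
  set V := compositeLyapunov γ Q s e
  set g := fun t => γ * η * s t ^ 2 + κ * ⟪Y t, e t⟫ ^ 2
  have hV' : ∀ t, 0 ≤ t → HasDerivAt V (-g t) t := fun t ht =>
    hasDerivAt_compositeLyapunov hPsym hPQ hQsym (hs t ht) ((ha t ht).sub_const a)
  have hg : ∀ t, 0 ≤ t → 0 ≤ g t := fun t _ => by positivity
  have hVle : ∀ t, 0 ≤ t → V t ≤ V 0 := fun t ht =>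
    antitoneOn_Ici_of_hasDerivAt_neg hV' hg self_mem_Ici ht ht
  have hgint : IntegrableOn g (Ici 0) := (integrableOn_Ici_iff_integrableOn_Ioi).2 <|
    integrableOn_Ioi_of_hasDerivAt_neg hV' hg fun t _ =>
      (by positivity : 0 ≤ γ / 2 * s t ^ 2).trans (half_mul_sq_le_compositeLyapunov hQnn s e t)
  have hsLinf : InLinf s := inLinf_of_mul_sq_le (half_pos hγ) fun t ht => by
    simpa using (half_mul_sq_le_compositeLyapunov hQnn s e t).trans (hVle t ht)
  have heLinf : InLinf e := inLinf_of_mul_sq_le (half_pos hμ) fun t ht =>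
    (half_mul_norm_sq_le_compositeLyapunov hγ.le hQμ s e t).trans (hVle t ht)
  obtain ⟨R, hR⟩ := hsx hsLinf
  obtain ⟨M, hM⟩ := hYloc R
  have hwLinf : InLinf fun t => ⟪Y t, e t⟫ :=
    InLinf.inner ⟨M, fun t ht => hM t ht (hR t ht)⟩ heLinf
  have hsL2 : InL2 s := inL2_of_mul_sq_le hgint (mul_pos hγ hη) fun t _ => by
    rw [Real.norm_eq_abs, sq_abs]; exact le_add_of_nonneg_right (by positivity)
  have hwL2 : InL2 fun t => ⟪Y t, e t⟫ := inL2_of_mul_sq_le hgint hκ fun t _ => by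
    rw [Real.norm_eq_abs, sq_abs]; exact le_add_of_nonneg_left (by positivity)
  have hstend : Tendsto s atTop (nhds 0) := tendsto_zero_of_inL2_of_uniformContinuousOn hsL2
    (uniformContinuousOn_Ici_of_hasDerivAt hs ((hsLinf.const_mul (-η)).add hwLinf))
  exact ⟨hsx hsLinf, by simpa [e] using heLinf.add (inLinf_const a), ⟨hsL2, hsLinf⟩, hwL2,
    hstend, hxd hstend⟩

end
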